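/- Let A be a finite dimensional k-algebra with c ∈ Z(A) ∩ U(A) and h ∈ A* satisfying α(a⊗b)(c) − α(b⊗a)(c) + h(ab−ba) = 0 for a Hochschild 2-cocycle α. Then the map φ : T → T* defined by φ(a,f)((b,g)) := h(ab) + g(ca) + f(bc) + α(a⊗b)(c) is injective. -/
import Mathlib


namespace HochschildExtension

variable (k : Type*) [Field k] (A : Type*) [Ring A] [Algebra k A]

/-- The underlying vector space `A ⊕ A*` of the Hochschild extension `T(A,α)`. -/
abbrev Ext : Type _ := A × Module.Dual k A

/-- The Hochschild 2-cocycle condition for `α : A ⊗ A → A*`, written pointwise using the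
dual bimodule structure `(c·f·a)(b) = f(abc)`, i.e. `(a·g)(x) = g(xa)`, `(f·b)(x) = f(bx)`. -/
def IsCocycle (α : A →ₗ[k] A →ₗ[k] Module.Dual k A) : Prop :=
  ∀ a b d x : A, α b d (x * a) - α (a * b) d x + α a (b * d) x - α a b (d * x) = 0

/-- The multiplication of the Hochschild extension `T(A,α)`:
`(a,f)(b,g) = (ab, a·g + f·b + α(a⊗b))`, where `(a·g)(x) = g(xa)` and `(f·b)(x) = f(bx)`. -/
noncomputable def hmul (α : A →ₗ[k] A →ₗ[k] Module.Dual k A) (p q : Ext k A) : Ext k A :=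
  (p.1 * q.1,
    q.2 ∘ₗ LinearMap.mulRight k p.1 + p.2 ∘ₗ LinearMap.mulLeft k q.1 + α p.1 q.1)

/-- The identity element `(1, -α(1⊗1))` of the Hochschild extension `T(A,α)`. -/
noncomputable def hone (α : A →ₗ[k] A →ₗ[k] Module.Dual k A) : Ext k A :=
  (1, -(α 1 1))

/-- `T(A,α)` is a symmetric algebra: there is a `k`-linear bijection
`φ : T(A,α) → T(A,α)*` which is a morphism of `T(A,α)`-bimodules, where `T(A,α)*`
carries the canonical bimodule structure `(t·ξ·s)(u) = ξ(sut)`. -/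
noncomputable def IsSymmetric (α : A →ₗ[k] A →ₗ[k] Module.Dual k A) : Prop :=
  ∃ φ : Ext k A ≃ₗ[k] Module.Dual k (Ext k A),
    ∀ x y u : Ext k A,
      φ (hmul k A α x y) u = φ x (hmul k A α y u) ∧
      φ (hmul k A α y x) u = φ x (hmul k A α u y)

/-- With `c ∈ Z(A) ∩ U(A)` and `h ∈ A*` satisfying
`α(a⊗b)(c) − α(b⊗a)(c) + h(ab − ba) = 0`, the map `φ : T → T*` defined by
`φ(a,f)((b,g)) := h(ab) + g(ca) + f(bc) + α(a⊗b)(c)` is injective. -/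
theorem phi_injective
    (k : Type*) [Field k] (A : Type*) [Ring A] [Algebra k A] [FiniteDimensional k A]
    (α : A →ₗ[k] A →ₗ[k] Module.Dual k A) (hα : IsCocycle k A α)
    (c : A) (hc : ∀ b : A, b * c = c * b) (hcu : IsUnit c)
    (h : Module.Dual k A)
    (H : ∀ a b : A, α a b c - α b a c + h (a * b - b * a) = 0) :
    Function.Injective (fun p : Ext k A =>
      (fun q : Ext k A => h (p.1 * q.1) + q.2 (c * p.1) + p.2 (q.1 * c) + α p.1 q.1 c)) := by
  intro p q hpq
  simp only at hpq
  have key : ∀ r : Ext k A,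
      h (p.1 * r.1) + r.2 (c * p.1) + p.2 (r.1 * c) + α p.1 r.1 c
      = h (q.1 * r.1) + r.2 (c * q.1) + q.2 (r.1 * c) + α q.1 r.1 c := by
    intro r
    exact congrFun hpq r
  have h1 : p.1 = q.1 := by
    have hg : ∀ g : Module.Dual k A, g (c * p.1 - c * q.1) = 0 := by
      intro g
      have := key (0, g)
      simp only [mul_zero, map_zero, zero_mul, LinearMap.zero_apply,
        LinearMap.map_zero] at this
      rw [map_sub]
      linear_combination this
    have h0 : c * p.1 - c * q.1 = 0 :=
      (Module.forall_dual_apply_eq_zero_iff k _).mp hg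
    exact hcu.mul_left_cancel (sub_eq_zero.mp h0)
  have h2 : p.2 = q.2 := by
    apply LinearMap.ext
    intro x
    obtain ⟨u, hu⟩ := hcu
    have hb : (x * ↑u⁻¹) * c = x := by
      rw [← hu, mul_assoc]
      simp
    have := key (x * ↑u⁻¹, 0)
    simp only [LinearMap.zero_apply, map_zero] at this
    rw [h1, hb] at this
    linear_combination this
  exact Prod.ext h1 h2

end HochschildExtension
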